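/- arXiv:2405.12649 — 10 statements merged into one kernel-verified Lean document; each statement's English description precedes it below -/
import Mathlib

section
/- Let M be a manifold with a commutative product ∘ on vector fields and a vector field E satisfying the eventual identity condition L_E(∘)(X,Y) = [e,E] ∘ X ∘ Y for all vector fields X, Y, where e is the unit of ∘. Then the Nijenhuis torsion of the endomorphism L = E∘ vanishes: [E∘X, E∘Y] + E∘E∘[X,Y] − E∘[X, E∘Y] − E∘[E∘X, Y] = 0 for all vector fields X, Y. -/
/-- Let `M` be an F-manifold (commutative associative product `o` on vector fields,
unit `e`, satisfying the Hertling–Manin condition) with an eventual identity `E`,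
i.e. `Lie_E(∘)(X,Y) = [e,E] ∘ X ∘ Y`.  Then the Nijenhuis torsion of `L = E ∘`
vanishes:  `[E∘X, E∘Y] + E∘E∘[X,Y] - E∘[X, E∘Y] - E∘[E∘X, Y] = 0`. -/
theorem nijenhuis_of_eventual_identity
    {V : Type*} [LieRing V] [Module ℝ V]
    (o : V →ₗ[ℝ] V →ₗ[ℝ] V) (e E : V)
    (hcomm : ∀ X Y, o X Y = o Y X)
    (hassoc : ∀ X Y Z, o (o X Y) Z = o X (o Y Z))
    (hunit : ∀ X, o e X = X)
    -- the Hertling–Manin integrability condition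
    (hHM : ∀ X Y W Z : V,
      ⁅o X Y, o W Z⁆ - o ⁅o X Y, Z⁆ W - o ⁅o X Y, W⁆ Z
        - o X ⁅Y, o Z W⁆ + o X (o ⁅Y, Z⁆ W) + o X (o ⁅Y, W⁆ Z)
        - o Y ⁅X, o Z W⁆ + o Y (o ⁅X, Z⁆ W) + o Y (o ⁅X, W⁆ Z) = 0)
    -- `E` is an eventual identity
    (hEvId : ∀ X Y : V,
      ⁅E, o X Y⁆ - o ⁅E, X⁆ Y - o X ⁅E, Y⁆ = o ⁅e, E⁆ (o X Y)) :
    ∀ X Y : V,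
      ⁅o E X, o E Y⁆ + o E (o E ⁅X, Y⁆) - o E ⁅X, o E Y⁆ - o E ⁅o E X, Y⁆ = 0 := by
  intro X Y
  have hEE : (⁅E, E⁆ : V) = 0 := lie_self E
  -- derived form of the eventual identity for `⁅E, E∘Z⁆`
  have hD : ∀ Z : V, ⁅E, o E Z⁆ = o E ⁅E, Z⁆ + o ⁅e, E⁆ (o E Z) := by
    intro Z
    have h := hEvId E Z
    rw [hEE] at h
    simp only [map_zero, LinearMap.zero_apply, zero_sub, sub_zero] at h
    exact sub_eq_iff_eq_add'.mp h
  -- symmetric term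
  have hsym : o (o ⁅e, E⁆ (o E X)) Y = o X (o ⁅e, E⁆ (o E Y)) := by
    rw [hassoc, hassoc, hcomm X (o ⁅e, E⁆ (o E Y)), hassoc, hassoc, hcomm Y X]
  have key := hHM E X E Y
  rw [hcomm Y E] at key
  have hXE : ⁅o E X, E⁆ = -(o E ⁅E, X⁆ + o ⁅e, E⁆ (o E X)) := by
    rw [← lie_skew (o E X) E, hD X]
  rw [hXE, hD Y] at key
  rw [show (⁅X, E⁆ : V) = -⁅E, X⁆ from by rw [← lie_skew X E]] at key
  rw [hcomm ⁅o E X, Y⁆ E, hcomm ⁅X, Y⁆ E, hcomm ⁅E, Y⁆ E, hEE] at key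
  simp only [map_add, map_neg, map_zero, LinearMap.add_apply, LinearMap.neg_apply,
    LinearMap.zero_apply, add_zero] at key
  rw [hassoc E ⁅E, X⁆ Y] at key
  rw [hsym] at key
  abel_nf at key ⊢
  exact key
end

section
/- Let (M, ∇, ∘, e, ∇*, *, E) be a bi-flat F-manifold. Then the dual connection is expressed in terms of the natural connection by ∇*_X Y = ∇_X Y − ∇_{X*Y} E for all vector fields X, Y. In particular, in local coordinates the Christoffel symbols satisfy b^k_{ij} = a^k_{ij} − c^{*l}_{ji} ∇_l E^k. -/
/-- Abstract algebraic model of a bi-flat F-manifold: `V` plays the role of the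
(global) vector fields, with its Lie bracket, the two products `o` (`∘`, with unit `e`)
and `star` (`*`, with unit `E`), and the two flat torsionless connections
`nab` (`∇`, the natural connection) and `nabS` (`∇*`, the dual connection). -/
structure BiFlatF (V : Type*) [LieRing V] [Module ℝ V] where
  o : V →ₗ[ℝ] V →ₗ[ℝ] V
  star : V →ₗ[ℝ] V →ₗ[ℝ] V
  nab : V →ₗ[ℝ] V →ₗ[ℝ] V
  nabS : V →ₗ[ℝ] V →ₗ[ℝ] V
  e : V
  E : V
  o_comm : ∀ X Y, o X Y = o Y X
  o_assoc : ∀ X Y Z, o (o X Y) Z = o X (o Y Z)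
  star_comm : ∀ X Y, star X Y = star Y X
  star_assoc : ∀ X Y Z, star (star X Y) Z = star X (star Y Z)
  e_unit : ∀ X, o e X = X
  E_unit : ∀ X, star E X = X
  /-- `X * Y = (E ∘)⁻¹ (X ∘ Y)` -/
  star_def : ∀ X Y, o E (star X Y) = o X Y
  /-- `L = E ∘` is invertible -/
  L_inj : Function.Injective fun X => o E X
  nab_torsion : ∀ X Y, nab X Y - nab Y X = ⁅X, Y⁆
  nab_flat : ∀ X Y Z, nab X (nab Y Z) - nab Y (nab X Z) - nab ⁅X, Y⁆ Z = 0
  nabS_torsion : ∀ X Y, nabS X Y - nabS Y X = ⁅X, Y⁆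
  nabS_flat : ∀ X Y Z, nabS X (nabS Y Z) - nabS Y (nabS X Z) - nabS ⁅X, Y⁆ Z = 0
  nab_e : ∀ X, nab X e = 0
  nabS_E : ∀ X, nabS X E = 0
  /-- symmetry of `∇ c` (equivalent to flatness of the pencil `∇ - λ ∘`) -/
  nab_c_symm : ∀ X Y Z,
    nab X (o Y Z) - o (nab X Y) Z - o Y (nab X Z)
      = nab Y (o X Z) - o (nab Y X) Z - o X (nab Y Z)
  /-- symmetry of `∇* c*` -/
  nabS_cs_symm : ∀ X Y Z,
    nabS X (star Y Z) - star (nabS X Y) Z - star Y (nabS X Z)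
      = nabS Y (star X Z) - star (nabS Y X) Z - star X (nabS Y Z)
  /-- `E` is an Euler vector field: `[e,E] = e` -/
  euler_e : ⁅e, E⁆ = e
  /-- `Lie_E (∘) = ∘` -/
  euler_o : ∀ X Y, ⁅E, o X Y⁆ - o ⁅E, X⁆ Y - o X ⁅E, Y⁆ = o X Y
  /-- `E` is linear: `∇² E = 0` -/
  euler_lin : ∀ X Y, nab X (nab Y E) - nab (nab X Y) E = 0
  /-- compatibility `(d_∇ - d_∇*)(X ∘) = 0` -/
  compat : ∀ X Y Z,
    nab Y (o X Z) - nab Z (o X Y) = nabS Y (o X Z) - nabS Z (o X Y)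

/-- On a bi-flat F-manifold the dual connection is expressed in terms of the natural
connection by `∇*_X Y = ∇_X Y - ∇_{X*Y} E`. -/
theorem dual_from_natural {V : Type*} [LieRing V] [Module ℝ V] (B : BiFlatF V) :
    ∀ X Y : V, B.nabS X Y = B.nab X Y - B.nab (B.star X Y) B.E := by
  -- First: the case of direction E
  have hE : ∀ W : V, B.nabS B.E W = B.nab B.E W - B.nab W B.E := by
    intro W
    have h1 := B.nabS_torsion B.E W
    rw [B.nabS_E, sub_zero] at h1
    have h2 := B.nab_torsion B.E W
    rw [h1, ← h2]
  intro X Y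
  set Z := B.star B.e Y with hZ
  have hEZ : B.o B.E Z = Y := by
    have := B.star_def B.e Y
    rwa [B.e_unit] at this
  have hstar : B.star X Y = B.o X Z := by
    apply B.L_inj
    show B.o B.E (B.star X Y) = B.o B.E (B.o X Z)
    rw [B.star_def, ← hEZ, ← B.o_assoc, B.o_comm X B.E, B.o_assoc]
  have hc := B.compat Z X B.E
  have hZE : B.o Z B.E = Y := by rw [B.o_comm, hEZ]
  have hZX : B.o Z X = B.star X Y := by rw [B.o_comm, hstar]
  rw [hZE, hZX] at hc
  rw [hE (B.star X Y)] at hc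
  -- hc : nab X Y - nab E (star X Y) = nabS X Y - (nab E (star X Y) - nab (star X Y) E)
  have h2 : B.nabS X Y
      = (B.nab X Y - B.nab B.E (B.star X Y))
        + (B.nab B.E (B.star X Y) - B.nab (B.star X Y) B.E) := by
    rw [hc]; abel
  rw [h2]; abel
end

section
/- Let (M, ∇, ∘, e, ∇*, *, E) be a bi-flat F-manifold. Then the natural connection is expressed in terms of the dual connection by ∇_X Y = ∇*_X Y − ∇_{X∘Y} e for all vector fields X, Y (equivalently a^k_{ij} = b^k_{ij} − c^l_{ji} ∇*_l e^k in coordinates). -/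
/-- On a bi-flat F-manifold the natural connection is expressed in terms of the dual
connection by `∇_X Y = ∇*_X Y - ∇*_{X∘Y} e` (in coordinates,
`a^k_{ij} = b^k_{ij} - c^l_{ji} ∇*_l e^k`). -/
theorem natural_from_dual {V : Type*} [LieRing V] [Module ℝ V] (B : BiFlatF V) :
    ∀ X Y : V, B.nab X Y = B.nabS X Y - B.nabS (B.o X Y) B.e := by
  intro X Y
  set W := B.o X Y with hW
  have h := B.compat X Y B.e
  rw [B.o_comm X B.e, B.e_unit, ← hW] at h
  have h3 : B.nab B.e W = ⁅B.e, W⁆ := by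
    have t := B.nab_torsion B.e W
    rwa [B.nab_e, sub_zero] at t
  have h4 : B.nabS B.e W = ⁅B.e, W⁆ + B.nabS W B.e :=
    eq_add_of_sub_eq (B.nabS_torsion B.e W)
  rw [h3, h4] at h
  have h' : B.nab Y X = B.nabS Y X - B.nabS W B.e := by
    rw [sub_add_eq_sub_sub, sub_right_comm] at h
    exact sub_left_inj.mp h
  have t1 : B.nab X Y = ⁅X, Y⁆ + B.nab Y X := eq_add_of_sub_eq (B.nab_torsion X Y)
  have t2 : B.nabS X Y = ⁅X, Y⁆ + B.nabS Y X := eq_add_of_sub_eq (B.nabS_torsion X Y)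
  rw [t1, t2, h']
  abel
end

section
/- On a bi-flat F-manifold with L = E∘, the two compatibility conditions (d_∇ − d_{∇*})(X∘) = 0 and (d_∇ − d_{∇*})(X*) = 0 are equivalent on the open set where L is invertible. In coordinates: b^k_{lj}c^l_{im} − b^k_{li}c^l_{jm} = a^k_{lj}c^l_{im} − a^k_{li}c^l_{jm} holds for all indices if and only if b^k_{lj}c^{*l}_{im} − b^k_{li}c^{*l}_{jm} = a^k_{lj}c^{*l}_{im} − a^k_{li}c^{*l}_{jm} holds for all indices. -/
open Finset

/-- On a bi-flat F-manifold with `L = E∘` invertible, the compatibility conditions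
`(d_∇ - d_∇*)(X∘) = 0` and `(d_∇ - d_∇*)(X*) = 0` are equivalent.  In coordinates
(with `c^i_{lk} = L^i_j c*^j_{lk} = L^j_l c*^i_{jk}` and `L` invertible):
`b^k_{lj}c^l_{im} - b^k_{li}c^l_{jm} = a^k_{lj}c^l_{im} - a^k_{li}c^l_{jm}` (all indices)
iff
`b^k_{lj}c*^l_{im} - b^k_{li}c*^l_{jm} = a^k_{lj}c*^l_{im} - a^k_{li}c*^l_{jm}` (all indices). -/
theorem compat_natural_iff_compat_dual {n : ℕ}
    (a b c cs : Fin n → Fin n → Fin n → ℝ)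
    (L : Matrix (Fin n) (Fin n) ℝ) (hL : IsUnit L)
    -- `c` and `c*` are structure constants of commutative associative products
    (hc_comm : ∀ k i j, c k i j = c k j i)
    (hcs_comm : ∀ k i j, cs k i j = cs k j i)
    (hc_assoc : ∀ i j k m, ∑ s, c i s j * c s k m = ∑ s, c i s k * c s j m)
    (hcs_assoc : ∀ i j k m, ∑ s, cs i s j * cs s k m = ∑ s, cs i s k * cs s j m)
    -- `c^i_{lk} = L^i_j c*^j_{lk}` and `c^i_{lk} = L^j_l c*^i_{jk}`
    (hLc₁ : ∀ i l k, c i l k = ∑ j, L i j * cs j l k)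
    (hLc₂ : ∀ i l k, c i l k = ∑ j, L j l * cs i j k) :
    ((∀ k i j m,
        (∑ l, b k l j * c l i m) - (∑ l, b k l i * c l j m)
          = (∑ l, a k l j * c l i m) - (∑ l, a k l i * c l j m))
      ↔ (∀ k i j m,
        (∑ l, b k l j * cs l i m) - (∑ l, b k l i * cs l j m)
          = (∑ l, a k l j * cs l i m) - (∑ l, a k l i * cs l j m))) := by
  classical
  set D : Fin n → Matrix (Fin n) (Fin n) ℝ := fun j => Matrix.of fun k l => b k l j - a k l j with hD
  set S : Fin n → Matrix (Fin n) (Fin n) ℝ := fun i => Matrix.of fun l m => cs l i m with hS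
  have hLS : ∀ i, (L * S i) = Matrix.of fun l m => c l i m := by
    intro i; ext l m
    simp only [Matrix.mul_apply, Matrix.of_apply, hS]
    exact (hLc₁ l i m).symm
  have hSL : ∀ i, (S i * L) = Matrix.of fun l m => c l i m := by
    intro i; ext l m
    simp only [Matrix.mul_apply, Matrix.of_apply, hS]
    calc ∑ j, cs l i j * L j m = ∑ j, L j m * cs l j i := by
          refine Finset.sum_congr rfl fun j _ => ?_
          rw [hcs_comm l i j, mul_comm]
      _ = c l m i := (hLc₂ l m i).symm
      _ = c l i m := (hc_comm l i m).symm
  have entryC : ∀ i j k m, (D j * (L * S i)) k m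
      = (∑ l, b k l j * c l i m) - (∑ l, a k l j * c l i m) := by
    intro i j k m
    rw [hLS]
    simp [hD, Matrix.mul_apply, Matrix.of_apply, sub_mul, Finset.sum_sub_distrib]
  have entryS : ∀ i j k m, (D j * S i) k m
      = (∑ l, b k l j * cs l i m) - (∑ l, a k l j * cs l i m) := by
    intro i j k m
    simp [Matrix.mul_apply, sub_mul, Finset.sum_sub_distrib, hD, hS]
  have keyC : (∀ k i j m,
        (∑ l, b k l j * c l i m) - (∑ l, b k l i * c l j m)
          = (∑ l, a k l j * c l i m) - (∑ l, a k l i * c l j m))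
      ↔ ∀ i j, D j * (L * S i) = D i * (L * S j) := by
    constructor
    · intro h i j
      ext k m
      rw [entryC i j k m, entryC j i k m]
      have := h k i j m
      linarith
    · intro h k i j m
      have := congrFun (congrFun (h i j) k) m
      rw [entryC i j k m, entryC j i k m] at this
      linarith
  have keyS : (∀ k i j m,
        (∑ l, b k l j * cs l i m) - (∑ l, b k l i * cs l j m)
          = (∑ l, a k l j * cs l i m) - (∑ l, a k l i * cs l j m))
      ↔ ∀ i j, D j * S i = D i * S j := by
    constructor
    · intro h i j
      ext k m
      rw [entryS i j k m, entryS j i k m]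
      have := h k i j m
      linarith
    · intro h k i j m
      have := congrFun (congrFun (h i j) k) m
      rw [entryS i j k m, entryS j i k m] at this
      linarith
  rw [keyC, keyS]
  constructor
  · intro h i j
    have h1 : D j * S i * L = D i * S j * L := by
      rw [mul_assoc, mul_assoc, hSL, hSL, ← hLS, ← hLS]
      exact h i j
    exact hL.mul_right_cancel h1
  · intro h i j
    rw [hLS, hLS, ← hSL, ← hSL, ← mul_assoc, ← mul_assoc, h i j]
end

section
/- Let (M, ∇, ∘, e, ∇*, *, E) be a bi-flat F-manifold, L = E∘, and for λ a scalar set L_λ = L − λ·Id. Then on the open set where L_λ is invertible, the Gauss–Manin connection ∇^{GM}_X Y = ∇*_X Y + λ(∇*_{L_λ^{-1}X} Y − ∇_{L_λ^{-1}X} Y) is torsionless: T_{∇^{GM}}(L_λ X, L_λ Y) = 0 for all vector fields X, Y. -/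
/-- On a bi-flat F-manifold, with `L = E∘`, `L_λ = L - λ·Id` invertible (with inverse
`Minv`), the Gauss–Manin connection
`∇^{GM}_X Y = ∇*_X Y + λ(∇*_{L_λ⁻¹X} Y - ∇_{L_λ⁻¹X} Y)` is torsionless:
`T_{∇^{GM}}(L_λ X, L_λ Y) = 0` for all vector fields `X`, `Y`. -/
theorem gaussManin_torsionless {V : Type*} [LieRing V] [Module ℝ V] (B : BiFlatF V)
    (lam : ℝ) (Minv : V → V)
    (hMinv₁ : ∀ X, B.o B.E (Minv X) - lam • Minv X = X)
    (hMinv₂ : ∀ X, Minv (B.o B.E X - lam • X) = X) :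
    ∀ X Y : V,
      (fun (U W : V) =>
          B.nabS U W + lam • (B.nabS (Minv U) W - B.nab (Minv U) W))
        (B.o B.E X - lam • X) (B.o B.E Y - lam • Y)
      - (fun (U W : V) =>
          B.nabS U W + lam • (B.nabS (Minv U) W - B.nab (Minv U) W))
        (B.o B.E Y - lam • Y) (B.o B.E X - lam • X)
      - ⁅B.o B.E X - lam • X, B.o B.E Y - lam • Y⁆ = 0 := by
  intro X Y
  have h1 := B.nabS_torsion (B.o B.E X - lam • X) (B.o B.E Y - lam • Y)
  have h2 := B.nabS_torsion X Y
  have h3 := B.nab_torsion X Y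
  have h4 := B.compat B.E X Y
  simp only [hMinv₂, map_sub, map_smul, LinearMap.sub_apply, LinearMap.smul_apply] at h1 ⊢
  rw [← h1]
  linear_combination (norm := module) (-lam) • h4 + (lam*lam) • h3 - (lam*lam) • h2
end

section
/- Let (M, ∇, ∘, e, ∇*, *, E) be a bi-flat F-manifold with L = E∘ and L_λ = L − λ·Id invertible. Then the Gauss–Manin connection ∇^{GM}_X Y = ∇*_X Y + λ(∇*_{L_λ^{-1}X}Y − ∇_{L_λ^{-1}X}Y) is flat: its curvature tensor vanishes identically, i.e. R^{GM}(L_λ X, L_λ Y)Z = 0 for all vector fields X, Y, Z. -/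
section Aux

variable {V : Type*} [LieRing V] [Module ℝ V] (B : BiFlatF V)

lemma BiFlatF.phi_symm (A C : V) :
    B.nab A C - B.nabS A C = B.nab C A - B.nabS C A := by
  linear_combination (norm := module) B.nab_torsion A C - B.nabS_torsion A C

lemma BiFlatF.phi_L (A C : V) :
    B.nabS (B.o B.E A) C = B.nab (B.o B.E A) C - B.nab (B.o A C) B.E := by
  have q1 := B.phi_symm (B.o B.E A) C
  have q2 := B.compat A C B.E
  have q3 := B.phi_symm B.E (B.o A C)
  have q4 := B.nabS_E (B.o A C)
  have c1 : B.nab C (B.o A B.E) = B.nab C (B.o B.E A) := by rw [B.o_comm A B.E]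
  have c2 : B.nabS C (B.o A B.E) = B.nabS C (B.o B.E A) := by rw [B.o_comm A B.E]
  linear_combination (norm := module) -q1 - q2 - q3 + q4 + c1 - c2

lemma BiFlatF.heA (A : V) :
    B.nab (B.o B.E A) B.E - B.nab B.E (B.o B.E A)
      = -(B.o B.E A) - B.o B.E (B.nab B.E A) + B.o B.E (B.nab A B.E) := by
  have h1 := B.nab_torsion (B.o B.E A) B.E
  have h2 := B.euler_o A B.E
  rw [lie_self] at h2
  simp only [map_zero, sub_zero] at h2
  rw [B.o_comm A B.E, B.o_comm ⁅B.E, A⁆ B.E] at h2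
  have h3 := lie_skew (B.o B.E A) B.E
  have h6 := congrArg (fun t => B.o B.E t) (B.nab_torsion B.E A)
  simp only [map_sub] at h6
  linear_combination (norm := module) h1 - h2 - h3 + h6

lemma BiFlatF.brA (X Y : V) :
    ⁅B.o B.E X, B.o B.E Y⁆
      = B.o B.E (B.nab (B.o B.E X) Y) - B.o B.E (B.nab (B.o B.E Y) X)
        + B.o B.E (B.o Y (B.nab X B.E)) - B.o B.E (B.o X (B.nab Y B.E)) := by
  have t1 := B.nab_torsion (B.o B.E X) (B.o B.E Y)
  have s1 := B.nab_c_symm (B.o B.E X) B.E Y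
  have s2 := B.nab_c_symm (B.o B.E Y) B.E X
  have heXoY := congrArg (fun t => B.o t Y) (B.heA X)
  have heYoX := congrArg (fun t => B.o t X) (B.heA Y)
  simp only [map_sub, map_add, map_neg, LinearMap.sub_apply, LinearMap.add_apply,
    LinearMap.neg_apply] at heXoY heYoX
  have aEXY := B.o_assoc B.E (B.nab B.E X) Y
  have aXEY := B.o_assoc B.E (B.nab X B.E) Y
  have aEYX := B.o_assoc B.E (B.nab B.E Y) X
  have aYEX := B.o_assoc B.E (B.nab Y B.E) X
  have asX := B.o_assoc B.E X (B.nab B.E Y)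
  have asY := B.o_assoc B.E Y (B.nab B.E X)
  have commLXY : B.o (B.o B.E X) Y = B.o (B.o B.E Y) X := by
    rw [B.o_assoc, B.o_assoc, B.o_comm X Y]
  have nEcommLXY := congrArg (fun t => B.nab B.E t) commLXY
  have cXEY : B.o B.E (B.o (B.nab X B.E) Y) = B.o B.E (B.o Y (B.nab X B.E)) := by
    rw [B.o_comm (B.nab X B.E) Y]
  have cYEX : B.o B.E (B.o (B.nab Y B.E) X) = B.o B.E (B.o X (B.nab Y B.E)) := by
    rw [B.o_comm (B.nab Y B.E) X]
  have cEXY : B.o B.E (B.o (B.nab B.E X) Y) = B.o B.E (B.o Y (B.nab B.E X)) := by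
    rw [B.o_comm (B.nab B.E X) Y]
  have cEYX : B.o B.E (B.o (B.nab B.E Y) X) = B.o B.E (B.o X (B.nab B.E Y)) := by
    rw [B.o_comm (B.nab B.E Y) X]
  linear_combination (norm := module) -t1 + s1 - s2 + heXoY - heYoX - aEXY + aXEY
    + aEYX - aYEX - asX + asY - commLXY + nEcommLXY + cXEY - cYEX - cEXY + cEYX

lemma BiFlatF.lemB (X Y : V) :
    B.nab (B.o B.E X) Y - B.nab (B.o B.E Y) X + B.o Y (B.nab X B.E) - B.o X (B.nab Y B.E)
      = ⁅B.o B.E X, Y⁆ + ⁅X, B.o B.E Y⁆ - B.o B.E (B.nab X Y) + B.o B.E (B.nab Y X) := by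
  have t1 := B.nab_torsion (B.o B.E X) Y
  have t2 := B.nab_torsion X (B.o B.E Y)
  have s := B.nab_c_symm X Y B.E
  have cX : B.nab X (B.o Y B.E) = B.nab X (B.o B.E Y) := by rw [B.o_comm Y B.E]
  have cY : B.nab Y (B.o X B.E) = B.nab Y (B.o B.E X) := by rw [B.o_comm X B.E]
  have c1 : B.o (B.nab X Y) B.E = B.o B.E (B.nab X Y) := B.o_comm _ _
  have c2 : B.o (B.nab Y X) B.E = B.o B.E (B.nab Y X) := B.o_comm _ _
  linear_combination (norm := module) t1 + t2 - s + cX - cY - c1 + c2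

end Aux

set_option maxHeartbeats 4000000

/-- On a bi-flat F-manifold, with `L = E∘` and `L_λ = L - λ·Id` invertible, the
Gauss–Manin connection `∇^{GM}_X Y = ∇*_X Y + λ(∇*_{L_λ⁻¹X}Y - ∇_{L_λ⁻¹X}Y)` is flat:
`R^{GM}(L_λ X, L_λ Y) Z = 0` for all vector fields `X, Y, Z`. -/
theorem gaussManin_flat {V : Type*} [LieRing V] [Module ℝ V] (B : BiFlatF V)
    (lam : ℝ) (Minv : V → V)
    (hMinv₁ : ∀ X, B.o B.E (Minv X) - lam • Minv X = X)
    (hMinv₂ : ∀ X, Minv (B.o B.E X - lam • X) = X) :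
    ∀ X Y Z : V,
      (fun (U W : V) => B.nabS U W + lam • (B.nabS (Minv U) W - B.nab (Minv U) W))
          (B.o B.E X - lam • X)
          ((fun (U W : V) => B.nabS U W + lam • (B.nabS (Minv U) W - B.nab (Minv U) W))
            (B.o B.E Y - lam • Y) Z)
      - (fun (U W : V) => B.nabS U W + lam • (B.nabS (Minv U) W - B.nab (Minv U) W))
          (B.o B.E Y - lam • Y)
          ((fun (U W : V) => B.nabS U W + lam • (B.nabS (Minv U) W - B.nab (Minv U) W))
            (B.o B.E X - lam • X) Z)
      - (fun (U W : V) => B.nabS U W + lam • (B.nabS (Minv U) W - B.nab (Minv U) W))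
          ⁅B.o B.E X - lam • X, B.o B.E Y - lam • Y⁆ Z = 0 := by
  intro X Y Z
  have hbr : ⁅B.o B.E X - lam • X, B.o B.E Y - lam • Y⁆
      = B.o B.E (B.nab (B.o B.E X - lam • X) Y - B.nab (B.o B.E Y - lam • Y) X
            + B.o Y (B.nab X B.E) - B.o X (B.nab Y B.E))
        - lam • (B.nab (B.o B.E X - lam • X) Y - B.nab (B.o B.E Y - lam • Y) X
            + B.o Y (B.nab X B.E) - B.o X (B.nab Y B.E)) := by
    have tM := B.nab_torsion (B.o B.E X - lam • X) (B.o B.E Y - lam • Y)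
    have sM1 := B.nab_c_symm (B.o B.E X - lam • X) B.E Y
    have sM2 := B.nab_c_symm (B.o B.E Y - lam • Y) B.E X
    have heXoY := congrArg (fun t => B.o t Y) (B.heA X)
    have heYoX := congrArg (fun t => B.o t X) (B.heA Y)
    simp only [map_sub, map_add, map_neg, map_smul, LinearMap.sub_apply,
      LinearMap.add_apply, LinearMap.neg_apply, LinearMap.smul_apply]
      at tM sM1 sM2 heXoY heYoX
    have aEXY := B.o_assoc B.E (B.nab B.E X) Y
    have aXEY := B.o_assoc B.E (B.nab X B.E) Y
    have aEYX := B.o_assoc B.E (B.nab B.E Y) X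
    have aYEX := B.o_assoc B.E (B.nab Y B.E) X
    have asX := B.o_assoc B.E X (B.nab B.E Y)
    have asY := B.o_assoc B.E Y (B.nab B.E X)
    have commLXY : B.o (B.o B.E X) Y = B.o (B.o B.E Y) X := by
      rw [B.o_assoc, B.o_assoc, B.o_comm X Y]
    have nEcommLXY := congrArg (fun t => B.nab B.E t) commLXY
    have nEcommXY := congrArg (fun t => B.nab B.E t) (B.o_comm X Y)
    have cXEY : B.o B.E (B.o (B.nab X B.E) Y) = B.o B.E (B.o Y (B.nab X B.E)) := by
      rw [B.o_comm (B.nab X B.E) Y]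
    have cYEX : B.o B.E (B.o (B.nab Y B.E) X) = B.o B.E (B.o X (B.nab Y B.E)) := by
      rw [B.o_comm (B.nab Y B.E) X]
    have cEXY : B.o B.E (B.o (B.nab B.E X) Y) = B.o B.E (B.o Y (B.nab B.E X)) := by
      rw [B.o_comm (B.nab B.E X) Y]
    have cEYX : B.o B.E (B.o (B.nab B.E Y) X) = B.o B.E (B.o X (B.nab B.E Y)) := by
      rw [B.o_comm (B.nab B.E Y) X]
    have bXEY := B.o_comm (B.nab X B.E) Y
    have bYEX := B.o_comm (B.nab Y B.E) X
    have bEXY := B.o_comm (B.nab B.E X) Y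
    have bEYX := B.o_comm (B.nab B.E Y) X
    simp only [map_sub, map_add, map_smul, LinearMap.sub_apply, LinearMap.add_apply,
      LinearMap.smul_apply]
    linear_combination (norm := module) -tM + sM1 - sM2 + heXoY - heYoX - aEXY + aXEY
      + aEYX - aYEX - asX + asY - commLXY + nEcommLXY - lam • nEcommXY
      + cXEY - cYEX - cEXY + cEYX - lam • bXEY + lam • bYEX + lam • bEXY - lam • bEYX
  simp only [hbr, hMinv₂]
  have F1 := B.nabS_flat (B.o B.E X) (B.o B.E Y) Z
  have F2 := B.nab_flat X Y Z
  have F3 := B.nab_flat (B.o B.E X) Y Z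
  have F4 := B.nab_flat X (B.o B.E Y) Z
  have GA := congrArg (fun t => B.nabS t Z) (B.brA X Y)
  have GB := congrArg (fun t => B.nab t Z) (B.lemB X Y)
  have P1 := B.phi_L X (B.nab Y Z)
  have P2 := B.phi_L Y (B.nab X Z)
  have P5 := B.phi_L (B.nab X Y) Z
  have P6 := B.phi_L (B.nab Y X) Z
  have C1 := congrArg (fun t => B.nab X t) (B.phi_L Y Z)
  have C2 := congrArg (fun t => B.nab Y t) (B.phi_L X Z)
  have EL1 := B.euler_lin X (B.o Y Z)
  have EL2 := B.euler_lin Y (B.o X Z)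
  have cs := congrArg (fun t => B.nab t B.E) (B.nab_c_symm X Y Z)
  have torZ := congrArg (fun t => B.nab t Z) (B.nab_torsion X Y)
  simp only [map_sub, map_add, map_smul, LinearMap.sub_apply, LinearMap.add_apply,
    LinearMap.smul_apply] at GA GB C1 C2 cs torZ ⊢
  linear_combination (norm := module) F1 + (lam * lam) • F2 - lam • F3 - lam • F4
    + GA + lam • GB - lam • P1 + lam • P2 + lam • P5 - lam • P6 - lam • C1 + lam • C2
    + lam • EL1 - lam • EL2 + lam • cs - (lam * lam) • torZ
end

section
/- In the setting of a bi-flat F-manifold, the curvature R^{GM} of the Gauss–Manin connection satisfies R^{GM}(L_λ X, L_λ Y)Z = λ(∇*_{LY}∇_X Z − ∇_X∇*_{LY}Z + ∇_Y∇*_{LX}Z − ∇*_{LX}∇_Y Z) + λ(∇*_{L[X,Y]}Z + ∇_{[LX,Y]+[X,LY]−L[X,Y]}Z) for all vector fields X, Y, Z, assuming ∇ and ∇* are flat and N_L = 0. -/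
/-- Intermediate identity (GMR) in the proof of flatness of the Gauss–Manin connection:
`R^{GM}(L_λX, L_λY)Z = λ(∇*_{LY}∇_X Z - ∇_X∇*_{LY}Z + ∇_Y∇*_{LX}Z - ∇*_{LX}∇_Y Z)
 + λ(∇*_{L[X,Y]}Z + ∇_{[LX,Y]+[X,LY]-L[X,Y]}Z)`,
assuming `∇`, `∇*` flat and `N_L = 0` (in the setting of a bi-flat F-manifold). -/
theorem gaussManin_curvature_formula {V : Type*} [LieRing V] [Module ℝ V] (B : BiFlatF V)
    (hNL : ∀ X Y : V,
      ⁅B.o B.E X, B.o B.E Y⁆ + B.o B.E (B.o B.E ⁅X, Y⁆)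
        - B.o B.E ⁅X, B.o B.E Y⁆ - B.o B.E ⁅B.o B.E X, Y⁆ = 0)
    (lam : ℝ) (Minv : V → V)
    (hMinv₁ : ∀ X, B.o B.E (Minv X) - lam • Minv X = X)
    (hMinv₂ : ∀ X, Minv (B.o B.E X - lam • X) = X) :
    ∀ X Y Z : V,
      (fun (U W : V) => B.nabS U W + lam • (B.nabS (Minv U) W - B.nab (Minv U) W))
          (B.o B.E X - lam • X)
          ((fun (U W : V) => B.nabS U W + lam • (B.nabS (Minv U) W - B.nab (Minv U) W))
            (B.o B.E Y - lam • Y) Z)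
      - (fun (U W : V) => B.nabS U W + lam • (B.nabS (Minv U) W - B.nab (Minv U) W))
          (B.o B.E Y - lam • Y)
          ((fun (U W : V) => B.nabS U W + lam • (B.nabS (Minv U) W - B.nab (Minv U) W))
            (B.o B.E X - lam • X) Z)
      - (fun (U W : V) => B.nabS U W + lam • (B.nabS (Minv U) W - B.nab (Minv U) W))
          ⁅B.o B.E X - lam • X, B.o B.E Y - lam • Y⁆ Z
      =
      lam • (B.nabS (B.o B.E Y) (B.nab X Z) - B.nab X (B.nabS (B.o B.E Y) Z)
              + B.nab Y (B.nabS (B.o B.E X) Z) - B.nabS (B.o B.E X) (B.nab Y Z))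
      + lam • (B.nabS (B.o B.E ⁅X, Y⁆) Z
              + B.nab (⁅B.o B.E X, Y⁆ + ⁅X, B.o B.E Y⁆ - B.o B.E ⁅X, Y⁆) Z) := by

  intro X Y Z
  -- the Lie bracket is ℝ-bilinear (consequence of torsion-freeness of ∇)
  have hls : ∀ (c : ℝ) (A C : V), ⁅c • A, C⁆ = c • ⁅A, C⁆ := by
    intro c A C
    rw [← B.nab_torsion, ← B.nab_torsion A C]
    simp only [map_smul, LinearMap.smul_apply, smul_sub]
  have hls' : ∀ (c : ℝ) (A C : V), ⁅A, c • C⁆ = c • ⁅A, C⁆ := by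
    intro c A C
    rw [← lie_skew, hls, ← lie_skew A C, smul_neg]
  -- simplification of the Gauss–Manin connection on `L_λ`-images
  have hGM : ∀ (U W : V),
      B.nabS (B.o B.E U - lam • U) W
        + lam • (B.nabS (Minv (B.o B.E U - lam • U)) W
                  - B.nab (Minv (B.o B.E U - lam • U)) W)
      = B.nabS (B.o B.E U) W - lam • B.nab U W := by
    intro U W
    rw [hMinv₂]
    simp only [map_sub, map_smul, LinearMap.sub_apply, LinearMap.smul_apply, smul_sub]
    abel
  -- the bracket of `L_λ`-images is itself an `L_λ`-image
  have hbr : ⁅B.o B.E X - lam • X, B.o B.E Y - lam • Y⁆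
      = B.o B.E (⁅B.o B.E X, Y⁆ + ⁅X, B.o B.E Y⁆ - B.o B.E ⁅X, Y⁆ - lam • ⁅X, Y⁆)
        - lam • (⁅B.o B.E X, Y⁆ + ⁅X, B.o B.E Y⁆ - B.o B.E ⁅X, Y⁆ - lam • ⁅X, Y⁆) := by
    simp only [lie_sub, sub_lie, hls, hls', map_add, map_sub, map_smul]
    linear_combination (norm := module) hNL X Y
  simp only [hbr, hGM]
  have hf1 := B.nabS_flat (B.o B.E X) (B.o B.E Y) Z
  have hf2 := B.nab_flat X Y Z
  have hN' := congrArg (fun U => B.nabS U Z) (hNL X Y)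
  simp only [map_add, map_sub, LinearMap.add_apply, LinearMap.sub_apply, map_zero,
    LinearMap.zero_apply] at hN'
  simp only [map_add, map_sub, map_smul, LinearMap.add_apply, LinearMap.sub_apply,
    LinearMap.smul_apply]
  linear_combination (norm := module) hf1 + (lam * lam) • hf2 + hN'
end

section
/- Let (M, ∇, ∘, e, ∇*, *, E) be a bi-flat F-manifold, and for a parameter μ define the deformed dual connection ∇̃*_X Y = ∇*_X Y + μ(X*Y). Then ∇̃* is flat and torsionless, and the extended Gauss–Manin connection ∇̃^{GM}_X Y = ∇̃*_X Y + λ(∇̃*_{L_λ^{-1}X}Y − ∇_{L_λ^{-1}X}Y) is torsionless: T_{∇̃^{GM}}(L_λ X, L_λ Y) = 0 for all vector fields X, Y. -/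
/-- For a parameter `μ`, the deformed dual connection `∇̃*_X Y = ∇*_X Y + μ(X*Y)` of a
bi-flat F-manifold is flat and torsionless, and the extended Gauss–Manin connection
`∇̃^{GM}_X Y = ∇̃*_X Y + λ(∇̃*_{L_λ⁻¹X}Y - ∇_{L_λ⁻¹X}Y)` is torsionless:
`T_{∇̃^{GM}}(L_λ X, L_λ Y) = 0`. -/
theorem extended_gaussManin_torsionless {V : Type*} [LieRing V] [Module ℝ V]
    (B : BiFlatF V) (mu lam : ℝ) (Minv : V → V)
    (hMinv₁ : ∀ X, B.o B.E (Minv X) - lam • Minv X = X)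
    (hMinv₂ : ∀ X, Minv (B.o B.E X - lam • X) = X) :
    -- `∇̃*` is torsionless
    (∀ X Y : V,
      (B.nabS X Y + mu • B.star X Y) - (B.nabS Y X + mu • B.star Y X) = ⁅X, Y⁆) ∧
    -- `∇̃*` is flat
    (∀ X Y Z : V,
      (B.nabS X (B.nabS Y Z + mu • B.star Y Z) + mu • B.star X (B.nabS Y Z + mu • B.star Y Z))
      - (B.nabS Y (B.nabS X Z + mu • B.star X Z) + mu • B.star Y (B.nabS X Z + mu • B.star X Z))
      - (B.nabS ⁅X, Y⁆ Z + mu • B.star ⁅X, Y⁆ Z) = 0) ∧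
    -- the extended Gauss–Manin connection is torsionless
    (∀ X Y : V,
      (fun (U W : V) =>
          (B.nabS U W + mu • B.star U W)
            + lam • ((B.nabS (Minv U) W + mu • B.star (Minv U) W) - B.nab (Minv U) W))
        (B.o B.E X - lam • X) (B.o B.E Y - lam • Y)
      - (fun (U W : V) =>
          (B.nabS U W + mu • B.star U W)
            + lam • ((B.nabS (Minv U) W + mu • B.star (Minv U) W) - B.nab (Minv U) W))
        (B.o B.E Y - lam • Y) (B.o B.E X - lam • X)
      - ⁅B.o B.E X - lam • X, B.o B.E Y - lam • Y⁆ = 0) := by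

  constructor
  · intro X Y
    rw [B.star_comm X Y, ← B.nabS_torsion X Y]
    abel
  constructor
  · intro X Y Z
    have hC : B.star X (B.star Y Z) - B.star Y (B.star X Z) = 0 := by
      rw [← B.star_assoc, B.star_comm X Y, B.star_assoc, sub_self]
    have h2 : B.star (B.nabS X Y) Z - B.star (B.nabS Y X) Z - B.star ⁅X, Y⁆ Z = 0 := by
      rw [← B.nabS_torsion X Y]
      simp only [map_sub, LinearMap.sub_apply]
      abel
    have hB : B.nabS X (B.star Y Z) + B.star X (B.nabS Y Z) - B.nabS Y (B.star X Z)
        - B.star Y (B.nabS X Z) - B.star ⁅X, Y⁆ Z = 0 := by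
      have h := sub_eq_zero_of_eq (B.nabS_cs_symm X Y Z)
      suffices hs : (B.nabS X (B.star Y Z) - B.star (B.nabS X Y) Z - B.star Y (B.nabS X Z)
            - (B.nabS Y (B.star X Z) - B.star (B.nabS Y X) Z - B.star X (B.nabS Y Z)))
          + (B.star (B.nabS X Y) Z - B.star (B.nabS Y X) Z - B.star ⁅X, Y⁆ Z) = 0 by
        rw [← hs]; abel
      rw [h, h2]; simp
    have hA := B.nabS_flat X Y Z
    suffices hs : (B.nabS X (B.nabS Y Z) - B.nabS Y (B.nabS X Z) - B.nabS ⁅X, Y⁆ Z)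
        + mu • (B.nabS X (B.star Y Z) + B.star X (B.nabS Y Z) - B.nabS Y (B.star X Z)
            - B.star Y (B.nabS X Z) - B.star ⁅X, Y⁆ Z)
        + (mu * mu) • (B.star X (B.star Y Z) - B.star Y (B.star X Z)) = 0 by
      rw [← hs]
      simp only [map_add, map_smul]
      module
    rw [hA, hB, hC]; simp
  · intro X Y
    have h1 : ∀ U W : V, B.star U (B.o B.E W) = B.o U W := by
      intro U W
      apply B.L_inj
      show B.o B.E _ = B.o B.E _
      rw [B.star_def, ← B.o_assoc, B.o_comm U B.E, B.o_assoc]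
    have z1 : B.nabS (B.o B.E X - lam • X) (B.o B.E Y - lam • Y)
        - B.nabS (B.o B.E Y - lam • Y) (B.o B.E X - lam • X)
        - ⁅B.o B.E X - lam • X, B.o B.E Y - lam • Y⁆ = 0 :=
      sub_eq_zero_of_eq (B.nabS_torsion _ _)
    have z2 : B.star (B.o B.E X - lam • X) (B.o B.E Y - lam • Y)
        - B.star (B.o B.E Y - lam • Y) (B.o B.E X - lam • X) = 0 :=
      sub_eq_zero_of_eq (B.star_comm _ _)
    have z3 : (B.nabS X (B.o B.E Y) - B.nab X (B.o B.E Y))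
        - (B.nabS Y (B.o B.E X) - B.nab Y (B.o B.E X)) = 0 := by
      have hc := B.compat B.E X Y
      rw [sub_eq_zero, sub_eq_sub_iff_sub_eq_sub]
      exact hc.symm
    have z4 : (B.nabS X Y - B.nab X Y) - (B.nabS Y X - B.nab Y X) = 0 := by
      rw [sub_eq_zero, sub_eq_sub_iff_sub_eq_sub, B.nabS_torsion, B.nab_torsion]
    have z5 : B.star X (B.o B.E Y) - B.o X Y = 0 := sub_eq_zero_of_eq (h1 X Y)
    have z5' : B.star Y (B.o B.E X) - B.o Y X = 0 := sub_eq_zero_of_eq (h1 Y X)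
    have z6 : B.o X Y - B.o Y X = 0 := sub_eq_zero_of_eq (B.o_comm X Y)
    have z7 : B.star X Y - B.star Y X = 0 := sub_eq_zero_of_eq (B.star_comm X Y)
    simp only [hMinv₂]
    suffices hs : (B.nabS (B.o B.E X - lam • X) (B.o B.E Y - lam • Y)
          - B.nabS (B.o B.E Y - lam • Y) (B.o B.E X - lam • X)
          - ⁅B.o B.E X - lam • X, B.o B.E Y - lam • Y⁆)
        + mu • (B.star (B.o B.E X - lam • X) (B.o B.E Y - lam • Y)
          - B.star (B.o B.E Y - lam • Y) (B.o B.E X - lam • X))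
        + lam • ((B.nabS X (B.o B.E Y) - B.nab X (B.o B.E Y))
          - (B.nabS Y (B.o B.E X) - B.nab Y (B.o B.E X)))
        - (lam * lam) • ((B.nabS X Y - B.nab X Y) - (B.nabS Y X - B.nab Y X))
        + (lam * mu) • ((B.star X (B.o B.E Y) - B.o X Y)
          - (B.star Y (B.o B.E X) - B.o Y X) + (B.o X Y - B.o Y X))
        - (lam * lam * mu) • (B.star X Y - B.star Y X) = 0 by
      rw [← hs]
      simp only [map_add, map_sub, map_smul, LinearMap.add_apply, LinearMap.sub_apply,
        LinearMap.smul_apply]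
      module
    rw [z1, z2, z3, z4, z5, z5', z6, z7]; simp
end

section
/- Let (M, ∇, ∘, e, ∇*, *, E) be a bi-flat F-manifold and let U ⊂ M be an open set diffeomorphic to a ball. If X_{(0)} is a vector field on U with d_∇ d_{L∇*} X_{(0)} = 0, then there exists a sequence of vector fields {X_{(α)}}_{α∈ℕ} on U satisfying the Lenard–Magri recursion d_∇ X_{(α+1)} = d_{L∇*} X_{(α)} for all α, i.e. ∇_Y X_{(α+1)} = ∇*_{E∘Y} X_{(α)} for all vector fields Y. -/
namespace BiFlatFAux

variable {V : Type*} [LieRing V] [Module ℝ V]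

/-- `gam B A C = (∇_E c)(A, C)`. -/
def gam (B : BiFlatF V) (A C : V) : V :=
  B.nab B.E (B.o A C) - B.o (B.nab B.E A) C - B.o A (B.nab B.E C)

lemma gam_symm (B : BiFlatF V) (A C : V) : gam B A C = gam B C A := by
  unfold gam
  rw [B.o_comm A C, B.o_comm (B.nab B.E A) C, B.o_comm A (B.nab B.E C)]
  abel

lemma h1 (B : BiFlatF V) (A C : V) :
    B.nab A (B.o B.E C) = B.o B.E (B.nab A C) + B.o (B.nab A B.E) C + gam B A C := by
  have h := B.nab_c_symm A B.E C
  unfold gam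
  linear_combination (norm := module) h

lemma h2 (B : BiFlatF V) (A C : V) :
    B.nab (B.o A C) B.E
      = gam B A C + B.o (B.nab A B.E) C + B.o A (B.nab C B.E) - B.o A C := by
  have h := B.euler_o A C
  rw [← B.nab_torsion B.E (B.o A C), ← B.nab_torsion B.E A, ← B.nab_torsion B.E C] at h
  simp only [map_sub, LinearMap.sub_apply] at h
  unfold gam
  linear_combination (norm := module) -h

lemma h3 (B : BiFlatF V) (X Y Z : V) :
    gam B (B.o X Y) Z + B.o (gam B X Y) Z = gam B X (B.o Y Z) + B.o X (gam B Y Z) := by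
  unfold gam
  simp only [map_sub, LinearMap.sub_apply]
  linear_combination (norm := module)
    congrArg (fun v => B.nab B.E v) (B.o_assoc X Y Z)
    - B.o_assoc X Y (B.nab B.E Z) - B.o_assoc (B.nab B.E X) Y Z
    - B.o_assoc X (B.nab B.E Y) Z


lemma msymm (B : BiFlatF V) (P Q : V) :
    B.nab P Q - B.nabS P Q = B.nab Q P - B.nabS Q P := by
  linear_combination (norm := module) B.nab_torsion P Q - B.nabS_torsion P Q

lemma m_e (B : BiFlatF V) (P Q : V) :
    B.nab P Q - B.nabS P Q = B.nab B.e (B.o P Q) - B.nabS B.e (B.o P Q) := by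
  have h := B.compat P Q B.e
  rw [B.o_comm P B.e, B.e_unit P] at h
  linear_combination (norm := module) msymm B P Q + h

lemma m4 (B : BiFlatF V) (A C : V) :
    B.nab (B.o B.E A) C - B.nabS (B.o B.E A) C = B.nab (B.o A C) B.E := by
  have h1' := m_e B (B.o B.E A) C
  rw [B.o_assoc B.E A C] at h1'
  have h2' := m_e B (B.o A C) B.E
  rw [B.o_comm (B.o A C) B.E, B.nabS_E (B.o A C)] at h2'
  linear_combination (norm := module) h1' - h2'

lemma mm (B : BiFlatF V) (A C : V) :
    B.nab (B.o B.E A) C = B.nabS (B.o B.E A) C + B.nab (B.o A C) B.E := by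
  linear_combination (norm := module) m4 B A C

lemma phi9 (B : BiFlatF V) (X Y W : V) :
    B.nab X (B.o Y W) - B.nab Y (B.o X W) - B.o ⁅X, Y⁆ W
      - B.o Y (B.nab X W) + B.o X (B.nab Y W) = 0 := by
  have h := B.nab_c_symm X Y W
  have h2 := congrArg (fun v => B.o v W) (B.nab_torsion X Y)
  simp only [map_sub, LinearMap.sub_apply] at h2
  linear_combination (norm := module) h + h2

lemma nij (B : BiFlatF V) (X Y : V) :
    ⁅B.o B.E X, B.o B.E Y⁆
      = B.o B.E ⁅B.o B.E X, Y⁆ + B.o B.E ⁅X, B.o B.E Y⁆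
        - B.o B.E (B.o B.E ⁅X, Y⁆) := by
  rw [← B.nab_torsion (B.o B.E X) (B.o B.E Y), ← B.nab_torsion (B.o B.E X) Y,
      ← B.nab_torsion X (B.o B.E Y), ← B.nab_torsion X Y]
  simp only [map_sub, LinearMap.sub_apply]
  rw [h1 B (B.o B.E X) Y, h1 B (B.o B.E Y) X, h1 B X Y, h1 B Y X,
      h2 B B.E X, h2 B B.E Y]
  simp only [map_add, map_sub, LinearMap.add_apply, LinearMap.sub_apply]
  linear_combination (norm := module)
    h3 B B.E X Y - h3 B B.E Y X
    + congrArg (gam B B.E) (B.o_comm X Y)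
    + B.o_assoc (B.nab B.E B.E) X Y - B.o_assoc (B.nab B.E B.E) Y X
    + congrArg (fun v => B.o (B.nab B.E B.E) v) (B.o_comm X Y)
    + B.o_assoc B.E (B.nab X B.E) Y - B.o_assoc B.E (B.nab Y B.E) X
    - B.o_assoc B.E X Y + B.o_assoc B.E Y X
    - congrArg (fun v => B.o B.E v) (B.o_comm X Y)


lemma key (B : BiFlatF V) (Xp W : V)
    (H : ∀ Z : V, B.nab Z W = B.nabS (B.o B.E Z) Xp) :
    ∀ X Y : V, B.nab X (B.nabS (B.o B.E Y) W) - B.nab Y (B.nabS (B.o B.E X) W)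
      - B.nabS (B.o B.E ⁅X, Y⁆) W = 0 := by
  intro X Y
  have hs : ∀ A : V, B.nabS (B.o B.E A) W
      = B.nab (B.o B.E A) W - B.nab (B.o A W) B.E := by
    intro A
    linear_combination (norm := module) -(m4 B A W)
  rw [hs Y, hs X, hs ⁅X, Y⁆]
  simp only [map_sub]
  have f1 := B.nab_flat X (B.o B.E Y) W
  have f2 := B.nab_flat Y (B.o B.E X) W
  have el1 := B.euler_lin X (B.o Y W)
  have el2 := B.euler_lin Y (B.o X W)
  have b1 := H X
  have b2 := H Y
  have c1 : B.nab (B.o B.E Y) (B.nab X W)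
      = B.nab (B.o B.E Y) (B.nabS (B.o B.E X) Xp) := by rw [b1]
  have c2 : B.nab (B.o B.E X) (B.nab Y W)
      = B.nab (B.o B.E X) (B.nabS (B.o B.E Y) Xp) := by rw [b2]
  have m1 := mm B Y (B.nabS (B.o B.E X) Xp)
  have m2 := mm B X (B.nabS (B.o B.E Y) Xp)
  have sf := B.nabS_flat (B.o B.E Y) (B.o B.E X) Xp
  have ss : B.nabS ⁅B.o B.E Y, B.o B.E X⁆ Xp
      = -B.nabS ⁅B.o B.E X, B.o B.E Y⁆ Xp := by
    have h := congrArg (fun v => B.nabS v Xp) (lie_skew (B.o B.E Y) (B.o B.E X)).symm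
    simp only [map_neg, LinearMap.neg_apply] at h
    exact h
  have njS : B.nabS ⁅B.o B.E X, B.o B.E Y⁆ Xp
      = B.nabS (B.o B.E ⁅B.o B.E X, Y⁆) Xp + B.nabS (B.o B.E ⁅X, B.o B.E Y⁆) Xp
        - B.nabS (B.o B.E (B.o B.E ⁅X, Y⁆)) Xp := by
    have h := congrArg (fun v => B.nabS v Xp) (nij B X Y)
    simpa [map_add, map_sub, LinearMap.add_apply, LinearMap.sub_apply] using h
  have sk1 : B.nabS (B.o B.E ⁅B.o B.E X, Y⁆) Xp
      = -B.nabS (B.o B.E ⁅Y, B.o B.E X⁆) Xp := by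
    have h := congrArg (fun v => B.nabS (B.o B.E v) Xp) (lie_skew (B.o B.E X) Y).symm
    simp only [map_neg, LinearMap.neg_apply] at h
    exact h
  have b3 := H ⁅X, B.o B.E Y⁆
  have b4 := H ⁅Y, B.o B.E X⁆
  have b5 := H (B.o B.E ⁅X, Y⁆)
  have c1' : B.nab (B.o Y (B.nab X W)) B.E
      = B.nab (B.o Y (B.nabS (B.o B.E X) Xp)) B.E := by rw [b1]
  have c2' : B.nab (B.o X (B.nab Y W)) B.E
      = B.nab (B.o X (B.nabS (B.o B.E Y) Xp)) B.E := by rw [b2]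
  have pc := congrArg (fun v => B.nab v B.E) (phi9 B X Y W)
  simp only [map_sub, map_add, LinearMap.sub_apply, LinearMap.add_apply, map_zero,
    LinearMap.zero_apply] at pc
  linear_combination (norm := module)
    f1 - f2 - el1 + el2 + c1 - c2 + m1 - m2 + sf + ss - njS - sk1
      + b3 - b4 - b5 - c1' + c2' - pc

end BiFlatFAux

/-- Lenard–Magri chains: on (a ball-like open set of) a bi-flat F-manifold, where the
`d_∇`-cohomology on tangent-valued one-forms is trivial (Poincaré lemma in flat
coordinates), any vector field `X₀` with `d_∇ d_{L∇*} X₀ = 0` is the start of a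
sequence `{X_α}` with `d_∇ X_{α+1} = d_{L∇*} X_α`, i.e.
`∇_Y X_{α+1} = ∇*_{E∘Y} X_α` for all `Y`. -/
theorem lenard_magri_chain_exists {V : Type*} [LieRing V] [Module ℝ V] (B : BiFlatF V)
    -- triviality of the `d_∇`-cohomology on one-forms (the open set is a ball)
    (hexact : ∀ ω : V → V,
      (∀ X Y : V, B.nab X (ω Y) - B.nab Y (ω X) - ω ⁅X, Y⁆ = 0) →
      ∃ Z : V, ∀ Y, ω Y = B.nab Y Z)
    (X₀ : V)
    -- `d_∇ d_{L∇*} X₀ = 0`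
    (hX₀ : ∀ X Y : V,
      B.nab X (B.nabS (B.o B.E Y) X₀) - B.nab Y (B.nabS (B.o B.E X) X₀)
        - B.nabS (B.o B.E ⁅X, Y⁆) X₀ = 0) :
    ∃ Xs : ℕ → V, Xs 0 = X₀ ∧
      ∀ (α : ℕ) (Y : V), B.nab Y (Xs (α + 1)) = B.nabS (B.o B.E Y) (Xs α) := by
    classical
  have step : ∀ W : V,
      (∀ X Y : V, B.nab X (B.nabS (B.o B.E Y) W) - B.nab Y (B.nabS (B.o B.E X) W)
          - B.nabS (B.o B.E ⁅X, Y⁆) W = 0) →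
      ∃ Z : V, (∀ Y, B.nab Y Z = B.nabS (B.o B.E Y) W) ∧
        (∀ X Y : V, B.nab X (B.nabS (B.o B.E Y) Z) - B.nab Y (B.nabS (B.o B.E X) Z)
          - B.nabS (B.o B.E ⁅X, Y⁆) Z = 0) := by
    intro W hW
    obtain ⟨Z, hZ⟩ := hexact (fun Y => B.nabS (B.o B.E Y) W) hW
    have hZ' : ∀ Y, B.nab Y Z = B.nabS (B.o B.E Y) W := fun Y => (hZ Y).symm
    exact ⟨Z, hZ', BiFlatFAux.key B W Z hZ'⟩
  choose F hF1 hF2 using step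
  let g : ℕ → {W : V // ∀ X Y : V,
      B.nab X (B.nabS (B.o B.E Y) W) - B.nab Y (B.nabS (B.o B.E X) W)
        - B.nabS (B.o B.E ⁅X, Y⁆) W = 0} :=
    fun n => Nat.rec ⟨X₀, hX₀⟩ (fun _ p => ⟨F p.1 p.2, hF2 p.1 p.2⟩) n
  refine ⟨fun n => (g n).1, rfl, fun α Y => ?_⟩
  exact hF1 (g α).1 (g α).2 Y
end

section
/- Let (M, ∇, ∘, e, ∇*, *, E) be a bi-flat F-manifold with Gauss–Manin connection ∇^{GM}_X Y = ∇*_X Y + λ(∇*_{L_λ^{-1}X}Y − ∇_{L_λ^{-1}X}Y), L_λ = L − λId, L = E∘. If X satisfies ∇^{GM}X = 0, then ∇*_{LY}X − λ∇_Y X = 0 for all vector fields Y. Consequently, writing X as a formal power series X = X_{(0)} + λ^{-1}X_{(1)} + λ^{-2}X_{(2)} + ⋯ in λ^{-1} with vector field coefficients, the coefficients satisfy the Lenard–Magri recursion ∇_Y X_{(α+1)} = ∇*_{LY} X_{(α)} and ∇_Y X_{(0)} = 0 for all Y. -/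
/-- If `X` is flat for the Gauss–Manin connection
`∇^{GM}_X Y = ∇*_X Y + λ(∇*_{L_λ⁻¹X}Y - ∇_{L_λ⁻¹X}Y)`, then
`∇*_{LY}X - λ∇_Y X = 0` for all `Y`.  Consequently, for a formal power series
`X = X₀ + λ⁻¹X₁ + λ⁻²X₂ + ⋯` (whose flatness equation `∇*_{LY}X = λ∇_Y X` is encoded
coefficientwise in `ℤ`-graded form), the coefficients satisfy the Lenard–Magri
recursion `∇_Y X_{α+1} = ∇*_{LY} X_α` and `∇_Y X₀ = 0`. -/
theorem gaussManin_flat_sections_lenard_magri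
    {V : Type*} [LieRing V] [Module ℝ V] (B : BiFlatF V) :
    -- part 1: genuine flat sections
    (∀ (lam : ℝ) (Minv : V → V),
      (∀ X, B.o B.E (Minv X) - lam • Minv X = X) →
      (∀ X, Minv (B.o B.E X - lam • X) = X) →
      ∀ X : V,
        (∀ Y : V,
          B.nabS Y X + lam • (B.nabS (Minv Y) X - B.nab (Minv Y) X) = 0) →
        ∀ Y : V, B.nabS (B.o B.E Y) X - lam • B.nab Y X = 0) ∧
    -- part 2: formal power series flat sections satisfy the Lenard–Magri recursion
    (∀ Xc : ℕ → V,
      (∀ (Y : V) (m : ℤ),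
        (if m ≤ 0 then B.nabS (B.o B.E Y) (Xc (-m).toNat) else 0)
          = (if m ≤ 1 then B.nab Y (Xc (1 - m).toNat) else 0)) →
      (∀ Y : V, B.nab Y (Xc 0) = 0) ∧
      (∀ (α : ℕ) (Y : V), B.nab Y (Xc (α + 1)) = B.nabS (B.o B.E Y) (Xc α))) := by
  constructor
  · intro lam Minv hM hM' X hflat Y
    have h := hflat (B.o B.E Y - lam • Y)
    rw [hM'] at h
    have h2 : B.nabS (B.o B.E Y - lam • Y) X
        = B.nabS (B.o B.E Y) X - lam • B.nabS Y X := by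
      simp [map_sub, map_smul, LinearMap.sub_apply, LinearMap.smul_apply]
    rw [h2] at h
    have := h
    rw [smul_sub] at this
    linear_combination (norm := abel) this
  · intro Xc h
    constructor
    · intro Y
      have := h Y 1
      simpa using this.symm
    · intro α Y
      have := h Y (-(α : ℤ))
      have h0 : (-(α : ℤ)) ≤ 0 := by omega
      have h1 : (-(α : ℤ)) ≤ 1 := by omega
      rw [if_pos h0, if_pos h1] at this
      have e1 : (-(-(α : ℤ))).toNat = α := by omega
      have e2 : (1 - (-(α : ℤ))).toNat = α + 1 := by omega
      rw [e1, e2] at this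
      exact this.symm
end
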